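/- arXiv:1903.01351 — 5 statements merged into one kernel-verified Lean document; each statement's English description precedes it below -/
import Mathlib

section
/- Let p, q ≥ 2 be integers, and let a, b, u, v be integers with a ≤ p−1, b ≤ q−1, u ≥ 0, v ≥ 0. If (u−a) − p(v−b) ≡ 0 (mod pq−1), then u ≥ a or v ≥ q−1+b. -/
/-!
Put `x = u - a` and `y = v - b`. If both alternatives fail, then `1 - p ≤ x < 0` and
`1 - q ≤ y < q - 1`, which squeezes `x - p y` strictly between
`-(pq - 1)` and `pq - 1`. Divisibility then gives `x = p y`, a nonzero multiple of `p`
of absolute value less than `p`, which is impossible.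
-/

lemma abs_sub_mul_lt_mul_sub_one {p q x y : ℤ} (hp : 0 < p) (hx₀ : 1 - p ≤ x) (hx₁ : x < 0)
    (hy₀ : 1 - q ≤ y) (hy₁ : y < q - 1) : |x - p * y| < p * q - 1 := by
  rw [abs_lt]
  constructor <;> nlinarith

theorem loop_grading_ideal_i_general (p q a b u v : ℤ)
    (ha : a ≤ p - 1) (hb : b ≤ q - 1) (hu : 0 ≤ u) (hv : 0 ≤ v)
    (hdvd : (p * q - 1) ∣ ((u - a) - p * (v - b))) :
    a ≤ u ∨ q - 1 + b ≤ v := by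
  by_contra! h
  obtain ⟨hua, hvb⟩ := h
  have hp : 0 < p := by omega
  have hxy : u - a = p * (v - b) := sub_eq_zero.mp <| Int.eq_zero_of_abs_lt_dvd hdvd <|
    abs_sub_mul_lt_mul_sub_one hp (by omega) (by omega) (by omega) (by omega)
  have hx : u - a = 0 := Int.eq_zero_of_abs_lt_dvd ⟨v - b, hxy⟩ (by rw [abs_lt]; omega)
  omega

/-- Lemma `GradingIdeal`(i) for the loop polynomial `W = x^p y + x y^q`. -/
theorem loop_grading_ideal_i (p q a b u v : ℤ) (hp : 2 ≤ p) (hq : 2 ≤ q)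
    (ha : a ≤ p - 1) (hb : b ≤ q - 1) (hu : 0 ≤ u) (hv : 0 ≤ v)
    (hdvd : (p * q - 1) ∣ ((u - a) - p * (v - b))) :
    a ≤ u ∨ q - 1 + b ≤ v :=
  loop_grading_ideal_i_general p q a b u v ha hb hu hv hdvd
end

section
/- Let p, q ≥ 2 be integers, and let a, b, u, v be integers with a ≤ p−2, b ≤ q−1, u ≥ 0, v ≥ 0. If (u−a) − p(v−b) ≡ 0 (mod pq−1), then u ≥ a or v ≥ q+b. -/
/-! Suppose `u < a` and `v < q + b`, and put `s = u - a`, `t = v - b`. The bounds confine `s` to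
`[2 - p, -1]` and `t` to `[1 - q, q - 1]`, so `|s - p t| < pq - 1`; divisibility forces
`s = p t`, which is impossible for a nonzero `s` with `|s| < p`. -/

theorem Int.abs_sub_mul_lt_mul_sub_one {p q s t : ℤ} (hs : 2 - p ≤ s) (hs' : s < 0)
    (ht : |t| < q) : |s - p * t| < p * q - 1 := by
  have hp : 0 ≤ p := by linarith
  have hpt : |p * t| ≤ p * (q - 1) := by
    rw [abs_mul, abs_of_nonneg hp]
    exact mul_le_mul_of_nonneg_left (by omega) hp
  rw [abs_le] at hpt
  rw [abs_lt]
  constructor <;> linarith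

theorem loop_grading_ideal_ii_general (p q a b u v : ℤ)
    (ha : a ≤ p - 2) (hb : b ≤ q - 1) (hu : 0 ≤ u) (hv : 0 ≤ v)
    (hdvd : (p * q - 1) ∣ ((u - a) - p * (v - b))) :
    a ≤ u ∨ q + b ≤ v := by
  by_contra! ⟨hau, hvq⟩
  have ht : |v - b| < q := abs_lt.mpr ⟨by linarith, by linarith⟩
  have hst : u - a - p * (v - b) = 0 := Int.eq_zero_of_abs_lt_dvd hdvd
    (Int.abs_sub_mul_lt_mul_sub_one (by linarith) (by linarith) ht)
  have hs : u - a = 0 := Int.eq_zero_of_abs_lt_dvd (m := p) ⟨v - b, by linarith⟩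
    (abs_lt.mpr ⟨by linarith, by linarith⟩)
  linarith

/-- Lemma `GradingIdeal`(ii) for the loop polynomial `W = x^p y + x y^q`. -/
theorem loop_grading_ideal_ii (p q a b u v : ℤ) (hp : 2 ≤ p) (hq : 2 ≤ q)
    (ha : a ≤ p - 2) (hb : b ≤ q - 1) (hu : 0 ≤ u) (hv : 0 ≤ v)
    (hdvd : (p * q - 1) ∣ ((u - a) - p * (v - b))) :
    a ≤ u ∨ q + b ≤ v :=
  loop_grading_ideal_ii_general p q a b u v ha hb hu hv hdvd
end

section
/- Let p, q ≥ 2 be integers and let u, v be nonnegative integers, not both zero, with u − pv ≡ 0 (mod pq−1). Then (u ≥ pq−1 and v = 0), or (v ≥ pq−1 and u = 0), or (u ≥ p and v ≥ 1), or (u ≥ 1 and v ≥ q). -/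
/-!
Write `N = p q - 1`. If `v = 0` or `u = 0`, then `N` divides the other (nonzero) exponent, using
`p q ≡ 1 (mod N)` to cancel `p` in the second case, so that exponent is at least `N`. Otherwise
`u, v ≥ 1`, and either `v ≥ q`, or `p ≤ p v ≤ p (q - 1) < N`; in the latter case `u ≥ 0` and
`u ≡ p v (mod N)` force `u ≥ p v ≥ p`.
-/

theorem isCoprime_self_mul_sub_one {R : Type*} [CommRing R] (p q : R) : IsCoprime p (p * q - 1) :=
  ⟨q, -1, by ring⟩

theorem Int.le_of_dvd_sub_of_lt {n u a : ℤ} (hu : 0 ≤ u) (ha : a < n) (h : n ∣ u - a) : a ≤ u := by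
  by_contra! hlt
  have : u - a = 0 := Int.eq_zero_of_abs_lt_dvd h (by rw [abs_lt]; constructor <;> linarith)
  linarith

theorem loop_grading_zero_general (p q u v : ℤ) (hp : 2 ≤ p)
    (hu : 0 ≤ u) (hv : 0 ≤ v) (hne : ¬(u = 0 ∧ v = 0))
    (hdvd : (p * q - 1) ∣ (u - p * v)) :
    (p * q - 1 ≤ u ∧ v = 0) ∨ (p * q - 1 ≤ v ∧ u = 0) ∨
      (p ≤ u ∧ 1 ≤ v) ∨ (1 ≤ u ∧ q ≤ v) := by
  by_cases hv0 : v = 0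
  · subst hv0
    have hu_pos : 0 < u := lt_of_le_of_ne hu (by tauto)
    exact Or.inl ⟨Int.le_of_dvd hu_pos (by simpa using hdvd), rfl⟩
  by_cases hu0 : u = 0
  · subst hu0
    have hdvd_pv : p * q - 1 ∣ p * v := by simpa using hdvd
    have hdvd_v := (isCoprime_self_mul_sub_one p q).symm.dvd_of_dvd_mul_left hdvd_pv
    exact Or.inr (Or.inl ⟨Int.le_of_dvd (by omega) hdvd_v, rfl⟩)
  by_cases hqv : q ≤ v
  · exact Or.inr (Or.inr (Or.inr ⟨by omega, hqv⟩))
  have hv_pos : 1 ≤ v := by omega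
  have hpv_lt : p * v < p * q - 1 := by nlinarith
  have hpv_le : p * v ≤ u := Int.le_of_dvd_sub_of_lt hu hpv_lt hdvd
  exact Or.inr (Or.inr (Or.inl ⟨by nlinarith, hv_pos⟩))

/-- Lemma `GradingZero` for the loop polynomial `W = x^p y + x y^q`. -/
theorem loop_grading_zero (p q u v : ℤ) (hp : 2 ≤ p) (hq : 2 ≤ q)
    (hu : 0 ≤ u) (hv : 0 ≤ v) (hne : ¬(u = 0 ∧ v = 0))
    (hdvd : (p * q - 1) ∣ (u - p * v)) :
    (p * q - 1 ≤ u ∧ v = 0) ∨ (p * q - 1 ≤ v ∧ u = 0) ∨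
      (p ≤ u ∧ 1 ≤ v) ∨ (1 ≤ u ∧ q ≤ v) :=
  loop_grading_zero_general p q u v hp hu hv hne hdvd
end

section
/- Let p, q ≥ 2 and let a, b, u, v be integers with 0 ≤ a ≤ p−1, 0 ≤ b ≤ q−1, u, v ≥ 0, and u − pv ≡ a − pb (mod pq). Then (u ≥ a and v ≥ b) or u ≥ p + a. -/
/-! Reducing the congruence mod `p` gives `p ∣ u - a`; since `0 ≤ u` and `a < p` this forces
`a ≤ u`, and unless `p + a ≤ u` it forces `u = a`. Then the congruence collapses to
`p * q ∣ p * (b - v)`, i.e. `q ∣ v - b`, and the same argument with `0 ≤ v`, `b < q` gives `b ≤ v`. -/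

theorem Int.le_of_dvd_sub_of_nonneg_of_lt {n x c : ℤ} (hdvd : n ∣ x - c) (hx : 0 ≤ x)
    (hc : c < n) : c ≤ x := by
  by_contra! hxc
  have : c - x = 0 :=
    Int.eq_zero_of_dvd_of_nonneg_of_lt (by omega) (by omega) (dvd_sub_comm.mp hdvd)
  omega

theorem chain_grading_ii_general (p q a b u v : ℤ) (hp : 2 ≤ p)
    (ha : a ≤ p - 1) (hb : b ≤ q - 1)
    (hu : 0 ≤ u) (hv : 0 ≤ v)
    (hdvd : (p * q) ∣ ((u - p * v) - (a - p * b))) :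
    (a ≤ u ∧ b ≤ v) ∨ p + a ≤ u := by
  have hpu : p ∣ u - a := by
    have : p ∣ (u - p * v) - (a - p * b) + p * (v - b) := (dvd_mul_right p q |>.trans hdvd).add
      (dvd_mul_right p _)
    convert this using 1
    ring
  have hau : a ≤ u := Int.le_of_dvd_sub_of_nonneg_of_lt hpu hu (by omega)
  by_cases hpau : p + a ≤ u
  · exact Or.inr hpau
  have hua : u - a = 0 := Int.eq_zero_of_dvd_of_nonneg_of_lt (by omega) (by omega) hpu
  have hqv : q ∣ v - b := by
    rw [show (u - p * v) - (a - p * b) = p * (b - v) by linear_combination hua] at hdvd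
    exact dvd_sub_comm.mp ((mul_dvd_mul_iff_left (by omega)).mp hdvd)
  exact Or.inl ⟨hau, Int.le_of_dvd_sub_of_nonneg_of_lt hqv hv (by omega)⟩

/-- Lemma `ChainGrading`(ii) for the chain polynomial `W = x^p y + y^q`. -/
theorem chain_grading_ii (p q a b u v : ℤ) (hp : 2 ≤ p) (hq : 2 ≤ q)
    (ha0 : 0 ≤ a) (ha : a ≤ p - 1) (hb0 : 0 ≤ b) (hb : b ≤ q - 1)
    (hu : 0 ≤ u) (hv : 0 ≤ v)
    (hdvd : (p * q) ∣ ((u - p * v) - (a - p * b))) :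
    (a ≤ u ∧ b ≤ v) ∨ p + a ≤ u :=
  chain_grading_ii_general p q a b u v hp ha hb hu hv hdvd
end

section
/- Let p, q ≥ 2. Define φ(s,t) = 2πl/(p−1) + e^{−2s}(t − θ)/(e^{2s} + e^{−2s}) for real constants l, θ. Then the curve (x(t), y(t)) = √(δ/ε)·(e^{s + iφ(s,t)}, e^{−s + i(t − φ(s,t))}) satisfies the parallel transport ODE (ẋ, ẏ) = (−ċ/(ε(|x|²+|y|²)))·(ȳ, x̄) along the base path c(t) = −δ e^{it}, for every fixed real s and all real δ, ε > 0. -/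
/-!
Write `D = e^{2s} + e^{-2s}`. Along the curve, `x` and `y` rotate at the constant angular
speeds `φ̇ = e^{-2s}/D` and `1 - φ̇ = e^{2s}/D`, while `|x|² + |y|² = (δ/ε) D` stays constant, so the
coefficient `-ċ/(ε(|x|² + |y|²))` equals `i e^{it}/D`. Multiplying by `e^{it}` rotates `ȳ` into
`e^{-2s} x` and `x̄` into `e^{2s} y`, which turns the right-hand sides into `i φ̇ x` and
`i (1 - φ̇) y`, the velocities of `x` and `y`.
-/

open Real Complex

namespace NeckTransport

lemma norm_sq_ofReal_sqrt_mul_cexp {ρ : ℝ} (hρ : 0 ≤ ρ) (z : ℂ) :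
    ‖(√ρ : ℂ) * cexp z‖ ^ 2 = ρ * Real.exp (2 * z.re) := by
  rw [norm_mul, Complex.norm_exp, Complex.norm_real, Real.norm_of_nonneg (Real.sqrt_nonneg ρ),
    mul_pow, Real.sq_sqrt hρ, ← Real.exp_nat_mul]
  norm_num

lemma conj_ofReal_mul_cexp (r : ℝ) (z : ℂ) :
    starRingEnd ℂ ((r : ℂ) * cexp z) = r * cexp (starRingEnd ℂ z) := by
  rw [map_mul, Complex.conj_ofReal, ← Complex.exp_conj]

lemma conj_hyperbola_snd_mul_cexp_I_mul (r s τ ψ : ℝ) :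
    starRingEnd ℂ ((r : ℂ) * cexp (-(s : ℂ) + I * ((τ : ℂ) - ψ))) * cexp (I * τ)
      = (r * cexp (s + I * ψ)) * (Real.exp (-(2 * s)) : ℂ) := by
  rw [conj_ofReal_mul_cexp, mul_assoc, ← Complex.exp_add, Complex.ofReal_exp, mul_assoc,
    ← Complex.exp_add]
  congr 2
  simp only [map_add, map_neg, conj_ofReal, map_mul, conj_I, map_sub, neg_mul, ofReal_neg,
    ofReal_mul, ofReal_ofNat]
  ring

lemma conj_hyperbola_fst_mul_cexp_I_mul (r s τ ψ : ℝ) :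
    starRingEnd ℂ ((r : ℂ) * cexp (s + I * ψ)) * cexp (I * τ)
      = (r * cexp (-(s : ℂ) + I * ((τ : ℂ) - ψ))) * (Real.exp (2 * s) : ℂ) := by
  rw [conj_ofReal_mul_cexp, mul_assoc, ← Complex.exp_add, Complex.ofReal_exp, mul_assoc,
    ← Complex.exp_add]
  congr 2
  simp only [map_add, conj_ofReal, map_mul, conj_I, neg_mul, ofReal_mul, ofReal_ofNat]
  ring

lemma hasDerivAt_ofReal_mul_cexp_add_I_mul {ψ : ℝ → ℂ} {ψ' : ℂ} {t : ℝ}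
    (hψ : HasDerivAt ψ ψ' t) (r : ℝ) (a : ℂ) :
    HasDerivAt (fun u => (r : ℂ) * cexp (a + I * ψ u))
      ((r : ℂ) * cexp (a + I * ψ t) * (I * ψ')) t := by
  simpa [mul_assoc] using ((hψ.const_mul I).const_add a).cexp.const_mul (r : ℂ)

lemma hasDerivAt_ofReal_sub_ofReal {ψ : ℝ → ℝ} {ψ' t : ℝ} (hψ : HasDerivAt ψ ψ' t) :
    HasDerivAt (fun u : ℝ => (u : ℂ) - ψ u) (1 - ψ' : ℝ) t := by
  convert ((hasDerivAt_id t).sub hψ).ofReal_comp using 1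
  ext u
  simp

lemma hasDerivAt_const_mul_cexp_I_mul (a : ℂ) (t : ℝ) :
    HasDerivAt (fun u : ℝ => a * cexp (I * u)) (a * (I * cexp (I * t))) t := by
  simpa [mul_comm] using (((hasDerivAt_id t).ofReal_comp.const_mul I).cexp).const_mul a

lemma hasDerivAt_affine_phase (a b d θ t : ℝ) :
    HasDerivAt (fun u : ℝ => a + b * (u - θ) / d) (b / d) t := by
  simpa using ((((hasDerivAt_id t).sub_const θ).const_mul b).div_const d).const_add a

end NeckTransport

open NeckTransport

theorem neck_parallel_transport_general (p : ℕ)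
    (l θ s δ ε : ℝ) (hδ : 0 < δ) (hε : 0 < ε)
    (φ : ℝ → ℝ)
    (hφ : φ = fun t : ℝ => 2 * π * l / ((p : ℝ) - 1)
      + Real.exp (-(2 * s)) * (t - θ) / (Real.exp (2 * s) + Real.exp (-(2 * s))))
    (x y c : ℝ → ℂ)
    (hx : x = fun t : ℝ => (Real.sqrt (δ / ε) : ℂ) *
      Complex.exp ((s : ℂ) + Complex.I * ((φ t : ℝ) : ℂ)))
    (hy : y = fun t : ℝ => (Real.sqrt (δ / ε) : ℂ) *
      Complex.exp (-(s : ℂ) + Complex.I * (((t : ℝ) : ℂ) - ((φ t : ℝ) : ℂ))))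
    (hc : c = fun t : ℝ => -(δ : ℂ) * Complex.exp (Complex.I * (t : ℂ))) :
    ∀ t : ℝ,
      HasDerivAt x
        (-(deriv c t) /
            ((ε : ℂ) * (((‖x t‖ ^ 2 + ‖y t‖ ^ 2 : ℝ)) : ℂ)) *
          (starRingEnd ℂ) (y t)) t ∧
      HasDerivAt y
        (-(deriv c t) /
            ((ε : ℂ) * (((‖x t‖ ^ 2 + ‖y t‖ ^ 2 : ℝ)) : ℂ)) *
          (starRingEnd ℂ) (x t)) t := by
  intro t
  set D := Real.exp (2 * s) + Real.exp (-(2 * s)) with hD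
  have hD0 : D ≠ 0 := by positivity
  have hφ' : HasDerivAt φ (Real.exp (-(2 * s)) / D) t := hφ ▸ hasDerivAt_affine_phase _ _ _ _ _
  have hrate : 1 - Real.exp (-(2 * s)) / D = Real.exp (2 * s) / D := by
    rw [one_sub_div hD0, hD, add_sub_cancel_right]
  have hx' := hx ▸ hasDerivAt_ofReal_mul_cexp_add_I_mul hφ'.ofReal_comp √(δ / ε) s
  have hy' := hy ▸ hasDerivAt_ofReal_mul_cexp_add_I_mul
    (hrate ▸ hasDerivAt_ofReal_sub_ofReal hφ') √(δ / ε) (-s)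
  have hnorm : ‖x t‖ ^ 2 + ‖y t‖ ^ 2 = δ / ε * D := by
    rw [hx, hy, norm_sq_ofReal_sqrt_mul_cexp (by positivity),
      norm_sq_ofReal_sqrt_mul_cexp (by positivity)]
    simp only [add_re, ofReal_re, mul_re, I_re, zero_mul, I_im, ofReal_im, mul_zero, sub_self,
      add_zero, neg_re, sub_re, sub_im, mul_neg, hD]
    ring
  have hcoef : -(deriv c t) / ((ε : ℂ) * ((‖x t‖ ^ 2 + ‖y t‖ ^ 2 : ℝ) : ℂ))
      = I * cexp (I * t) / D := by
    rw [hc, (hasDerivAt_const_mul_cexp_I_mul _ t).deriv, hnorm]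
    push_cast
    field_simp [hδ.ne', hε.ne']
  rw [hcoef]
  subst hx hy
  constructor
  · convert hx' using 1
    rw [ofReal_div]
    linear_combination (I / D) * conj_hyperbola_snd_mul_cexp_I_mul √(δ / ε) s t (φ t)
  · convert hy' using 1
    rw [ofReal_div]
    linear_combination (I / D) * conj_hyperbola_fst_mul_cexp_I_mul √(δ / ε) s t (φ t)

/-- The rotating hyperbola `(x(t), y(t)) = √(δ/ε)(e^{s+iφ(s,t)}, e^{-s+i(t-φ(s,t))})`,
with `φ(s,t) = 2πl/(p-1) + e^{-2s}(t-θ)/(e^{2s}+e^{-2s})`, solves the symplectic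
parallel transport ODE `(ẋ, ẏ) = (-ċ/(ε(|x|²+|y|²)))(ȳ, x̄)` over the base path
`c(t) = -δ e^{it}`. -/
theorem neck_parallel_transport (p q : ℕ) (hp : 2 ≤ p) (hq : 2 ≤ q)
    (l θ s δ ε : ℝ) (hδ : 0 < δ) (hε : 0 < ε)
    (φ : ℝ → ℝ)
    (hφ : φ = fun t : ℝ => 2 * π * l / ((p : ℝ) - 1)
      + Real.exp (-(2 * s)) * (t - θ) / (Real.exp (2 * s) + Real.exp (-(2 * s))))
    (x y c : ℝ → ℂ)
    (hx : x = fun t : ℝ => (Real.sqrt (δ / ε) : ℂ) *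
      Complex.exp ((s : ℂ) + Complex.I * ((φ t : ℝ) : ℂ)))
    (hy : y = fun t : ℝ => (Real.sqrt (δ / ε) : ℂ) *
      Complex.exp (-(s : ℂ) + Complex.I * (((t : ℝ) : ℂ) - ((φ t : ℝ) : ℂ))))
    (hc : c = fun t : ℝ => -(δ : ℂ) * Complex.exp (Complex.I * (t : ℂ))) :
    ∀ t : ℝ,
      HasDerivAt x
        (-(deriv c t) /
            ((ε : ℂ) * (((‖x t‖ ^ 2 + ‖y t‖ ^ 2 : ℝ)) : ℂ)) *
          (starRingEnd ℂ) (y t)) t ∧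
      HasDerivAt y
        (-(deriv c t) /
            ((ε : ℂ) * (((‖x t‖ ^ 2 + ‖y t‖ ^ 2 : ℝ)) : ℂ)) *
          (starRingEnd ℂ) (x t)) t :=
  neck_parallel_transport_general p l θ s δ ε hδ hε φ hφ x y c hx hy hc
end
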